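/- arXiv:2208.06138 — 6 statements merged into one kernel-verified Lean document; each statement's English description precedes it below -/
import Mathlib

section
/- Let n ≥ 1 and let A be a ring of rank n, i.e., a (not necessarily commutative) unital ring whose underlying additive group is free of rank n as a ℤ-module. Then the discriminant of A satisfies disc(A) ≡ 0 or 1 (mod 4). -/
open Matrix

/-- The Gram matrix of a ring of rank `n` with respect to a ℤ-basis `b`:
its `(i,j)` entry is the trace of the matrix of left multiplication by `b i * b j`. -/
noncomputable def gramMatrix {n : ℕ} {A : Type} [Ring A] (b : Module.Basis (Fin n) ℤ A) :
    Matrix (Fin n) (Fin n) ℤ :=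
  Matrix.of fun i j => (Algebra.leftMulMatrix b (b i * b j)).trace

/-- The discriminant of a ring of rank `n` with respect to a ℤ-basis `b`. -/
noncomputable def disc {n : ℕ} {A : Type} [Ring A] (b : Module.Basis (Fin n) ℤ A) : ℤ :=
  (gramMatrix b).det

/-!
The Gram matrix `G` is symmetric, and the coordinate vector `w` of `1` is characteristic for it
modulo 2: `(G w)ᵢ = Tr(eᵢ) ≡ Tr(eᵢ²) = Gᵢᵢ`, since `Tr(X²) ≡ Tr(X)² ≡ Tr(X)` for integer
matrices. Moreover `wᵀ G w = Tr(1) = n`.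

For every symmetric `n × n` matrix `M` over `ℤ/4` with a characteristic vector `w`,
`det M * (det M + n) = det M * (wᵀ M w + 1)`. This goes by induction on `n`: a Schur complement
splits off either a unit diagonal entry or, when the diagonal is even, a `2 × 2` block with odd
off-diagonal entry (its determinant is `-1`); if every entry is even then `det M = 0` once
`n ≥ 2`. For `M = G` and `wᵀ G w = n` the relation becomes `d² = d` with `d = disc`, which in
`ℤ/4` leaves `d = 0` or `d = 1`.
-/

theorem ZMod.mul_self_eq_one_of_two_mul_ne_zero : ∀ {x : ZMod 4}, 2 * x ≠ 0 → x * x = 1 := by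
  decide

theorem ZMod.mul_eq_zero_of_two_mul_eq_zero :
    ∀ {x y : ZMod 4}, 2 * x = 0 → 2 * y = 0 → x * y = 0 := by
  decide

theorem Int.two_mul_cast_eq_of_modEq_two {a b : ℤ} (h : a ≡ b [ZMOD 2]) :
    2 * (a : ZMod 4) = 2 * b := by
  exact_mod_cast (ZMod.intCast_eq_intCast_iff _ _ 4).mpr (h.mul_left' (c := 2))

theorem Int.emod_four_eq_zero_or_one_of_mul_self {x : ℤ} (h : (x : ZMod 4) * x = x) :
    x % 4 = 0 ∨ x % 4 = 1 := by
  rw [← ZMod.intCast_mod x 4] at h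
  have h0 := Int.emod_nonneg x (by norm_num : (4 : ℤ) ≠ 0)
  have h1 := Int.emod_lt_of_pos x (by norm_num : (0 : ℤ) < 4)
  generalize x % 4 = r at *
  interval_cases r <;> revert h <;> decide

open scoped Classical in
noncomputable def Function.Embedding.sumComplEquiv {κ ι : Type*} (f : κ ↪ ι) :
    κ ⊕ ↥(Set.range f)ᶜ ≃ ι :=
  (Equiv.sumCongr (Equiv.ofInjective f f.injective) (Equiv.refl _)).trans (Equiv.Set.sumCompl _)

namespace Matrix

theorem trace_mul_self_modEq_two {ι : Type*} [Fintype ι] [DecidableEq ι] (X : Matrix ι ι ℤ) :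
    (X * X).trace ≡ X.trace [ZMOD 2] := by
  refine (ZMod.intCast_eq_intCast_iff _ _ 2).mp ?_
  have h := ZMod.trace_pow_card (X.map (Int.castRingHom (ZMod 2)))
  rw [sq, ← Matrix.map_mul, ZMod.pow_card, ← AddMonoidHom.map_trace,
    ← AddMonoidHom.map_trace] at h
  simpa using h

theorem IsSymm.exists_eq_fromBlocks {α κ ι : Type*} {M : Matrix (κ ⊕ ι) (κ ⊕ ι) α}
    (hM : M.IsSymm) :
    ∃ (P : Matrix κ κ α) (B : Matrix ι κ α) (D : Matrix ι ι α),
      P.IsSymm ∧ D.IsSymm ∧ M = Matrix.fromBlocks P Bᵀ B D := by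
  rw [← fromBlocks_toBlocks M, isSymm_fromBlocks_iff] at hM
  obtain ⟨hP, -, hB, hD⟩ := hM
  exact ⟨_, _, _, hP, hD, by rw [hB, fromBlocks_toBlocks]⟩

theorem dotProduct_neg_adjugate_fin_two_mulVec {R : Type*} [CommRing R] (a c e : R)
    (x y : Fin 2 → R) :
    x ⬝ᵥ (-adjugate !![a, c; c, e]) *ᵥ y =
      x 0 * (-e * y 0 + c * y 1) + x 1 * (c * y 0 - a * y 1) := by
  simp [adjugate_fin_two_of, dotProduct, mulVec, Fin.sum_univ_two]
  ring

theorem IsSymm.sub_mul_mul_transpose {R κ ι : Type*} [CommRing R] [Fintype κ]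
    {Q : Matrix κ κ R} {D : Matrix ι ι R} (hQ : Q.IsSymm) (hD : D.IsSymm) (B : Matrix ι κ R) :
    (D - B * Q * Bᵀ).IsSymm :=
  hD.sub (by simp [IsSymm, transpose_mul, hQ.eq, Matrix.mul_assoc])

section SchurComplement

variable {R κ ι : Type*} [CommRing R] [Fintype κ] [Fintype ι] [DecidableEq κ]
  {P Q : Matrix κ κ R} (B : Matrix ι κ R) (D : Matrix ι ι R)

theorem det_fromBlocks_transpose_of_mul_eq_one [DecidableEq ι] (hQP : Q * P = 1)
    (hPQ : P * Q = 1) : (fromBlocks P Bᵀ B D).det = P.det * (D - B * Q * Bᵀ).det := by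
  let _ : Invertible P := ⟨Q, hQP, hPQ⟩
  exact det_fromBlocks₁₁ P Bᵀ B D

theorem sub_mul_mul_transpose_mulVec (hQP : Q * P = 1) (u : κ → R) (v : ι → R) :
    (D - B * Q * Bᵀ) *ᵥ v = B *ᵥ u + D *ᵥ v - B *ᵥ Q *ᵥ (P *ᵥ u + Bᵀ *ᵥ v) := by
  rw [mulVec_add Q, mulVec_mulVec (M := Q) (N := P), hQP, one_mulVec, mulVec_add, sub_mulVec,
    mulVec_mulVec, mulVec_mulVec, Matrix.mul_assoc]
  abel

theorem sumElim_dotProduct_fromBlocks_mulVec (hP : P.IsSymm) (hQP : Q * P = 1)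
    (hPQ : P * Q = 1) (u : κ → R) (v : ι → R) :
    Sum.elim u v ⬝ᵥ fromBlocks P Bᵀ B D *ᵥ Sum.elim u v =
      v ⬝ᵥ (D - B * Q * Bᵀ) *ᵥ v + (P *ᵥ u + Bᵀ *ᵥ v) ⬝ᵥ Q *ᵥ (P *ᵥ u + Bᵀ *ᵥ v) := by
  have hQy : Q *ᵥ (P *ᵥ u + Bᵀ *ᵥ v) = u + Q *ᵥ Bᵀ *ᵥ v := by
    rw [mulVec_add, mulVec_mulVec, hQP, one_mulVec]
  have hPu : P *ᵥ u ⬝ᵥ Q *ᵥ Bᵀ *ᵥ v = u ⬝ᵥ Bᵀ *ᵥ v := by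
    rw [dotProduct_comm, ← dotProduct_transpose_mulVec, hP.eq, mulVec_mulVec, hPQ, one_mulVec]
  rw [fromBlocks_mulVec, Sum.elim_comp_inl, Sum.elim_comp_inr, sumElim_dotProduct_sumElim, hQy]
  simp only [dotProduct_add, add_dotProduct, hPu, sub_mulVec, dotProduct_sub, ← mulVec_mulVec]
  rw [dotProduct_comm (Bᵀ *ᵥ v) (Q *ᵥ _), dotProduct_transpose_mulVec B (Q *ᵥ _) v,
    dotProduct_comm (P *ᵥ u) u, dotProduct_comm (Bᵀ *ᵥ v) u, dotProduct_transpose_mulVec B u v]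
  ring

end SchurComplement

section ZModFour

variable {κ ι : Type*} [Fintype κ] [Fintype ι]

/-- `M w ≡ diag M (mod 2)`, written in `ZMod 4` by multiplying both sides by 2. -/
def IsCharacteristicVector (M : Matrix ι ι (ZMod 4)) (w : ι → ZMod 4) : Prop :=
  ∀ i, 2 * (M *ᵥ w) i = 2 * M i i

/-- For a unit `det M` this says `det M = 1 + wᵀ M w - n`, as for a diagonal `M` with unit entries
`uᵢ = 1 + 2 eᵢ`, where `∏ uᵢ = 1 + 2 ∑ eᵢ` and `wᵀ M w = ∑ uᵢ`; for `det M = 2` it says that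
`wᵀ M w - n` is odd. -/
def StickelbergerRel [DecidableEq ι] (M : Matrix ι ι (ZMod 4)) (w : ι → ZMod 4) : Prop :=
  M.det * (M.det + Fintype.card ι) = M.det * (w ⬝ᵥ M *ᵥ w + 1)

theorem IsCharacteristicVector.submatrix_equiv {M : Matrix ι ι (ZMod 4)} {w : ι → ZMod 4}
    (hw : IsCharacteristicVector M w) (e : κ ≃ ι) :
    IsCharacteristicVector (M.submatrix e e) (w ∘ e) := by
  intro k
  simpa [submatrix_mulVec_equiv, Function.comp_assoc] using hw (e k)

theorem stickelbergerRel_submatrix_equiv_iff [DecidableEq κ] [DecidableEq ι]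
    (M : Matrix ι ι (ZMod 4)) (w : ι → ZMod 4) (e : κ ≃ ι) :
    StickelbergerRel (M.submatrix e e) (w ∘ e) ↔ StickelbergerRel M w := by
  rw [StickelbergerRel, StickelbergerRel, det_submatrix_equiv_self, Fintype.card_congr e,
    submatrix_mulVec_equiv, Function.comp_assoc, Equiv.self_comp_symm, Function.comp_id,
    comp_equiv_dotProduct_comp_equiv]

section Pivot

variable {P Q : Matrix κ κ (ZMod 4)} {B : Matrix ι κ (ZMod 4)} {D : Matrix ι ι (ZMod 4)}
  {u : κ → ZMod 4} {v : ι → ZMod 4}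

theorem IsCharacteristicVector.two_mul_fromBlocks_mulVec_inl
    (hw : IsCharacteristicVector (fromBlocks P Bᵀ B D) (Sum.elim u v)) (k : κ) :
    2 * (P *ᵥ u + Bᵀ *ᵥ v) k = 2 * P k k := by
  have hk := hw (Sum.inl k)
  rwa [fromBlocks_mulVec, Sum.elim_comp_inl, Sum.elim_comp_inr, Sum.elim_inl,
    fromBlocks_apply₁₁] at hk

theorem IsCharacteristicVector.sub_mul_mul_transpose [DecidableEq κ] (hQP : Q * P = 1)
    (hw : IsCharacteristicVector (fromBlocks P Bᵀ B D) (Sum.elim u v))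
    (hQ : ∀ b : κ → ZMod 4, 2 * (b ⬝ᵥ Q *ᵥ (P *ᵥ u + Bᵀ *ᵥ v)) = 2 * (b ⬝ᵥ Q *ᵥ b)) :
    IsCharacteristicVector (D - B * Q * Bᵀ) v := by
  intro j
  have hj := hw (Sum.inr j)
  rw [fromBlocks_mulVec, Sum.elim_comp_inl, Sum.elim_comp_inr, Sum.elim_inr,
    fromBlocks_apply₂₂] at hj
  have hBQB : (B * Q * Bᵀ) j j = B j ⬝ᵥ Q *ᵥ B j := by rw [dotProduct_mulVec]; rfl
  rw [sub_mul_mul_transpose_mulVec B D hQP u v, Pi.sub_apply, mul_sub, hj, sub_apply, mul_sub,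
    hBQB, ← hQ (B j)]
  rfl

theorem StickelbergerRel.fromBlocks [DecidableEq κ] [DecidableEq ι] (hP : P.IsSymm)
    (hQP : Q * P = 1) (hPQ : P * Q = 1) (h : StickelbergerRel (D - B * Q * Bᵀ) v)
    (hstep : ∀ d q n : ZMod 4, d * (d + n) = d * (q + 1) →
      P.det * d * (P.det * d + (Fintype.card κ + n)) =
        P.det * d * (q + (P *ᵥ u + Bᵀ *ᵥ v) ⬝ᵥ Q *ᵥ (P *ᵥ u + Bᵀ *ᵥ v) + 1)) :
    StickelbergerRel (Matrix.fromBlocks P Bᵀ B D) (Sum.elim u v) := by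
  rw [StickelbergerRel, det_fromBlocks_transpose_of_mul_eq_one B D hQP hPQ,
    sumElim_dotProduct_fromBlocks_mulVec B D hP hQP hPQ, Fintype.card_sum, Nat.cast_add]
  linear_combination hstep _ _ _ h

end Pivot

variable [DecidableEq ι]

theorem stickelbergerRel_of_unit_pivot {M : Matrix (Unit ⊕ ι) (Unit ⊕ ι) (ZMod 4)}
    (hM : M.IsSymm) {w : Unit ⊕ ι → ZMod 4} (hw : IsCharacteristicVector M w)
    (hpiv : 2 * M (.inl ()) (.inl ()) ≠ 0)
    (ih : ∀ {S : Matrix ι ι (ZMod 4)} {v : ι → ZMod 4}, S.IsSymm →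
      IsCharacteristicVector S v → StickelbergerRel S v) :
    StickelbergerRel M w := by
  obtain ⟨P, B, D, hP, hD, rfl⟩ := hM.exists_eq_fromBlocks
  obtain ⟨u, v, rfl⟩ : ∃ u v, w = Sum.elim u v := ⟨_, _, (Sum.elim_comp_inl_inr w).symm⟩
  set m := P () () with hm
  replace hpiv : 2 * m ≠ 0 := hpiv
  have hdot : ∀ b c : Unit → ZMod 4, b ⬝ᵥ P *ᵥ c = b () * (m * c ()) := by
    intro b c; simp [dotProduct, mulVec, hm]
  have hPP : P * P = 1 := by
    ext; simp [mul_apply, ← hm, ZMod.mul_self_eq_one_of_two_mul_ne_zero hpiv]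
  have hy : 2 * (P *ᵥ u + Bᵀ *ᵥ v) () = 2 * m := hw.two_mul_fromBlocks_mulVec_inl ()
  refine StickelbergerRel.fromBlocks hP hPP hPP
    (ih (hP.sub_mul_mul_transpose hD B) (hw.sub_mul_mul_transpose hPP fun b => ?_)) ?_
  · have key : ∀ x y z : ZMod 4, 2 * x ≠ 0 → 2 * y = 2 * x →
        2 * (z * (x * y)) = 2 * (z * (x * z)) := by decide
    rw [hdot, hdot]
    exact key _ _ _ hpiv hy
  · have key : ∀ x y d q n : ZMod 4, 2 * x ≠ 0 → 2 * y = 2 * x → d * (d + n) = d * (q + 1) →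
        x * d * (x * d + (1 + n)) = x * d * (q + y * (x * y) + 1) := by decide
    rw [hdot, det_unique, Fintype.card_unit, Nat.cast_one]
    exact fun d q n => key _ _ d q n hpiv hy

theorem stickelbergerRel_of_hyperbolic_pivot {M : Matrix (Fin 2 ⊕ ι) (Fin 2 ⊕ ι) (ZMod 4)}
    (hM : M.IsSymm) {w : Fin 2 ⊕ ι → ZMod 4} (hw : IsCharacteristicVector M w)
    (h00 : 2 * M (.inl 0) (.inl 0) = 0) (h11 : 2 * M (.inl 1) (.inl 1) = 0)
    (h01 : 2 * M (.inl 0) (.inl 1) ≠ 0)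
    (ih : ∀ {S : Matrix ι ι (ZMod 4)} {v : ι → ZMod 4}, S.IsSymm →
      IsCharacteristicVector S v → StickelbergerRel S v) :
    StickelbergerRel M w := by
  obtain ⟨P, B, D, hP, hD, rfl⟩ := hM.exists_eq_fromBlocks
  obtain ⟨u, v, rfl⟩ : ∃ u v, w = Sum.elim u v := ⟨_, _, (Sum.elim_comp_inl_inr w).symm⟩
  obtain ⟨a, c, e, rfl⟩ : ∃ a c e, P = !![a, c; c, e] :=
    ⟨P 0 0, P 0 1, P 1 1, (eta_fin_two P).trans (by rw [hP.apply 0 1])⟩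
  replace h00 : 2 * a = 0 := h00
  replace h11 : 2 * e = 0 := h11
  have hcc : c * c = 1 := ZMod.mul_self_eq_one_of_two_mul_ne_zero h01
  have hae : a * e = 0 := ZMod.mul_eq_zero_of_two_mul_eq_zero h00 h11
  have hdet : !![a, c; c, e].det = -1 := by
    rw [det_fin_two_of]; linear_combination hae - hcc
  set Q := -adjugate !![a, c; c, e]
  have hQP : Q * !![a, c; c, e] = 1 := by
    rw [neg_mul, adjugate_mul, hdet, neg_smul, one_smul, neg_neg]
  have hPQ : !![a, c; c, e] * Q = 1 := by
    rw [mul_neg, mul_adjugate, hdet, neg_smul, one_smul, neg_neg]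
  set y := !![a, c; c, e] *ᵥ u + Bᵀ *ᵥ v
  have hy : ∀ k, 2 * y k = 0 := by
    intro k
    fin_cases k
    exacts [(hw.two_mul_fromBlocks_mulVec_inl 0).trans h00,
      (hw.two_mul_fromBlocks_mulVec_inl 1).trans h11]
  have h4 : (4 : ZMod 4) = 0 := rfl
  refine StickelbergerRel.fromBlocks hP hQP hPQ
    (ih (hP.adjugate.neg.sub_mul_mul_transpose hD B) (hw.sub_mul_mul_transpose hQP fun b => ?_)) ?_
  · rw [dotProduct_neg_adjugate_fin_two_mulVec, dotProduct_neg_adjugate_fin_two_mulVec]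
    linear_combination (-e * b 0 + c * b 1) * hy 0 + (c * b 0 - a * b 1) * hy 1 +
      b 0 ^ 2 * h11 + b 1 ^ 2 * h00 - c * b 0 * b 1 * h4
  · have hyQy : y ⬝ᵥ Q *ᵥ y = 0 := by
      rw [dotProduct_neg_adjugate_fin_two_mulVec]
      linear_combination -e * ZMod.mul_eq_zero_of_two_mul_eq_zero (hy 0) (hy 0) +
        c * y 0 * hy 1 - a * ZMod.mul_eq_zero_of_two_mul_eq_zero (hy 1) (hy 1)
    have key : ∀ d q n : ZMod 4, d * (d + n) = d * (q + 1) →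
        -1 * d * (-1 * d + (2 + n)) = -1 * d * (q + 0 + 1) := by decide
    rw [hdet, hyQy, Fintype.card_fin, Nat.cast_ofNat]
    exact key

theorem stickelbergerRel_of_forall_two_mul_eq_zero {M : Matrix ι ι (ZMod 4)}
    (hM : ∀ i j, 2 * M i j = 0) (w : ι → ZMod 4) : StickelbergerRel M w := by
  rcases Nat.lt_or_ge (Fintype.card ι) 2 with hcard | hcard
  · interval_cases h : Fintype.card ι
    · have : IsEmpty ι := Fintype.card_eq_zero_iff.mp h
      simp [StickelbergerRel]
    · obtain ⟨_⟩ := Fintype.card_eq_one_iff_nonempty_unique.mp h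
      have key : ∀ x y : ZMod 4, 2 * x = 0 → x * (x + 1) = x * (y * (x * y) + 1) := by decide
      simpa [StickelbergerRel, h, det_unique, dotProduct, mulVec] using
        key _ (w default) (hM default default)
  · choose N hN using fun i j =>
      (by decide : ∀ x : ZMod 4, 2 * x = 0 → ∃ y, x = 2 * y) _ (hM i j)
    have hdet : M.det = 0 := by
      obtain ⟨k, hk⟩ := Nat.exists_eq_add_of_le hcard
      rw [show M = (2 : ZMod 4) • Matrix.of N by ext i j; exact hN i j, det_smul, hk, pow_add]
      simp [show (2 : ZMod 4) ^ 2 = 0 from rfl]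
    simp [StickelbergerRel, hdet]

theorem IsSymm.stickelbergerRel {M : Matrix ι ι (ZMod 4)} (hM : M.IsSymm) {w : ι → ZMod 4}
    (hw : IsCharacteristicVector M w) : StickelbergerRel M w := by
  induction hn : Fintype.card ι using Nat.strong_induction_on generalizing ι with
  | _ n ih =>
  have ih_compl {κ : Type _} [Fintype κ] [Nonempty κ] (f : κ ↪ ι) :
      ∀ {S : Matrix ↥(Set.range f)ᶜ ↥(Set.range f)ᶜ (ZMod 4)} {v}, S.IsSymm →
        IsCharacteristicVector S v → StickelbergerRel S v := by
    refine fun hS hv => ih _ ?_ hS hv rfl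
    rw [← hn, ← Fintype.card_congr f.sumComplEquiv, Fintype.card_sum]
    have := Fintype.card_pos (α := κ)
    omega
  by_cases hdiag : ∃ i, 2 * M i i ≠ 0
  · obtain ⟨i, hi⟩ := hdiag
    let e := (Function.Embedding.punit (β := ι) i).sumComplEquiv
    rw [← stickelbergerRel_submatrix_equiv_iff M w e]
    exact stickelbergerRel_of_unit_pivot (hM.submatrix e) (hw.submatrix_equiv e) hi
      (ih_compl _)
  push Not at hdiag
  by_cases hoff : ∃ i j, 2 * M i j ≠ 0
  · obtain ⟨i, j, hij⟩ := hoff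
    have hne : i ≠ j := by rintro rfl; exact hij (hdiag i)
    let f : Fin 2 ↪ ι := ⟨![i, j], by
      intro a b hab; fin_cases a <;> fin_cases b <;> simp_all [eq_comm]⟩
    rw [← stickelbergerRel_submatrix_equiv_iff M w f.sumComplEquiv]
    exact stickelbergerRel_of_hyperbolic_pivot (hM.submatrix _) (hw.submatrix_equiv _)
      (hdiag i) (hdiag j) hij (ih_compl f)
  push Not at hoff
  exact stickelbergerRel_of_forall_two_mul_eq_zero hoff w

end ZModFour

end Matrix

section GramMatrix

variable {n : ℕ} {A : Type} [Ring A] (b : Module.Basis (Fin n) ℤ A)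

theorem gramMatrix_isSymm : (gramMatrix b).IsSymm := by
  ext i j
  simp only [transpose_apply, gramMatrix, of_apply, map_mul]
  exact trace_mul_comm _ _

theorem gramMatrix_mulVec_repr (x : A) (i : Fin n) :
    (gramMatrix b *ᵥ b.repr x) i = (Algebra.leftMulMatrix b (b i * x)).trace := by
  conv_rhs => rw [← b.sum_repr x]
  simp only [mulVec, dotProduct, gramMatrix, of_apply, Finset.mul_sum, mul_smul_comm, map_sum,
    map_zsmul, trace_sum, trace_smul, smul_eq_mul, mul_comm]

theorem repr_dotProduct_gramMatrix_mulVec_repr (x y : A) :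
    b.repr y ⬝ᵥ gramMatrix b *ᵥ b.repr x = (Algebra.leftMulMatrix b (y * x)).trace := by
  conv_rhs => rw [← b.sum_repr y]
  simp only [dotProduct, gramMatrix_mulVec_repr, Finset.sum_mul, smul_mul_assoc, map_sum,
    map_zsmul, trace_sum, trace_smul, smul_eq_mul]

theorem isCharacteristicVector_gramMatrix :
    IsCharacteristicVector ((gramMatrix b).map (Int.castRingHom (ZMod 4)))
      (Int.castRingHom (ZMod 4) ∘ b.repr 1) := by
  intro i
  rw [← RingHom.map_mulVec, gramMatrix_mulVec_repr, mul_one, map_apply]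
  refine Int.two_mul_cast_eq_of_modEq_two ?_
  rw [gramMatrix, of_apply, map_mul]
  exact (trace_mul_self_modEq_two _).symm

end GramMatrix

theorem disc_mod_four_eq_zero_or_one_general (n : ℕ) (A : Type) [Ring A]
    (b : Module.Basis (Fin n) ℤ A) :
    disc b % 4 = 0 ∨ disc b % 4 = 1 := by
  set f := Int.castRingHom (ZMod 4)
  have hrel := ((gramMatrix_isSymm b).map f).stickelbergerRel (isCharacteristicVector_gramMatrix b)
  have hdet : f (disc b) = ((gramMatrix b).map f).det := f.map_det _
  have hq : (f ∘ b.repr 1) ⬝ᵥ (gramMatrix b).map f *ᵥ (f ∘ b.repr 1) = n := by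
    have hmv : (gramMatrix b).map f *ᵥ (f ∘ b.repr 1) = f ∘ (gramMatrix b *ᵥ b.repr 1) :=
      funext fun i => (f.map_mulVec _ _ i).symm
    rw [hmv, ← f.map_dotProduct, repr_dotProduct_gramMatrix_mulVec_repr, mul_one, map_one,
      trace_one, Fintype.card_fin, map_natCast]
  rw [StickelbergerRel, hq, Fintype.card_fin, ← hdet] at hrel
  exact Int.emod_four_eq_zero_or_one_of_mul_self (by linear_combination hrel)

/-- Stickelberger's discriminant theorem for rings of rank `n`:
the discriminant is congruent to `0` or `1` modulo `4`. -/
theorem disc_mod_four_eq_zero_or_one (n : ℕ) (hn : 1 ≤ n) (A : Type) [Ring A]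
    (b : Module.Basis (Fin n) ℤ A) :
    disc b % 4 = 0 ∨ disc b % 4 = 1 :=
  disc_mod_four_eq_zero_or_one_general n A b
end

section
/- Let A be a ring of rank n with a unital basis β = (e₁,…,eₙ) (a ℤ-basis with e₁ = 1), and let B(A,β) = (b_{ij}) be its Gram matrix. Then b₁₁ = n and b_{ii} ≡ b_{1i}² (mod 2) for all i = 2,…,n; that is, B(A,β) is tracelike. -/
/-! Left multiplication `λ : A → Mₙ(ℤ)` is a ring homomorphism, so for a unital basis
`b₁₁ = Tr λ(1) = n`, `b₁ᵢ = Tr λ(eᵢ)` and `bᵢᵢ = Tr (λ(eᵢ)²)`. Over `𝔽_p` one has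
`Tr (M ^ p) = (Tr M) ^ p`, which for `p = 2` gives `bᵢᵢ ≡ b₁ᵢ² (mod 2)`. -/

open Matrix

theorem Matrix.trace_pow_prime_modEq {m : Type*} [Fintype m] [DecidableEq m] {p : ℕ}
    [Fact p.Prime] (M : Matrix m m ℤ) : (M ^ p).trace ≡ M.trace ^ p [ZMOD p] := by
  rw [← ZMod.intCast_eq_intCast_iff, Int.cast_pow]
  simp only [← eq_intCast (Int.castRingHom (ZMod p)), AddMonoidHom.map_trace,
    ← RingHom.mapMatrix_apply, map_pow]
  exact ZMod.trace_pow_card _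

section UnitalBasis

variable {n : ℕ} [NeZero n] {A : Type} [Ring A] (b : Module.Basis (Fin n) ℤ A)

theorem gramMatrix_zero_apply (hb : b 0 = 1) (i : Fin n) :
    gramMatrix b 0 i = (Algebra.leftMulMatrix b (b i)).trace := by
  simp [gramMatrix, hb]

theorem gramMatrix_zero_zero (hb : b 0 = 1) : gramMatrix b 0 0 = n := by
  simp [gramMatrix_zero_apply b hb, hb]

theorem gramMatrix_diag_modEq_sq (hb : b 0 = 1) (i : Fin n) :
    gramMatrix b i i ≡ gramMatrix b 0 i ^ 2 [ZMOD 2] := by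
  rw [gramMatrix_zero_apply b hb, gramMatrix, of_apply, ← sq, map_pow]
  exact_mod_cast (Algebra.leftMulMatrix b (b i)).trace_pow_prime_modEq

end UnitalBasis

/-- If `b` is a unital basis (i.e. `b 0 = 1`) of a ring of rank `n`, then the Gram
matrix `B = B(A, b)` satisfies `B 0 0 = n` and `B i i ≡ (B 0 i)² (mod 2)` for all
`i ≠ 0`; that is, `B` is tracelike. -/
theorem gramMatrix_tracelike (n : ℕ) [NeZero n] (A : Type) [Ring A]
    (b : Module.Basis (Fin n) ℤ A) (hb : b 0 = 1) :
    gramMatrix b 0 0 = n ∧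
      ∀ i : Fin n, i ≠ 0 → gramMatrix b i i ≡ (gramMatrix b 0 i) ^ 2 [ZMOD 2] :=
  ⟨gramMatrix_zero_zero b hb, fun i _ => gramMatrix_diag_modEq_sq b hb i⟩
end

section
/- Let B = (b_{ij}) ∈ Mₙ(ℤ) be a tracelike matrix with 4 ∣ n, and for i = 2,…,n let cᵢ ∈ ℤ satisfy b_{ii} = b_{1i}² + 2cᵢ. Let C ∈ Mₙ(ℤ) be the matrix whose first row and first column agree with those of B (so C₁₁ = n and C₁ᵢ = Cᵢ₁ = b_{1i}), whose diagonal entries are Cᵢᵢ = 2cᵢ for i ≥ 2, and whose off-diagonal entries for 2 ≤ i ≠ j ≤ n are C_{ij} = b_{ij} − b_{1i}b_{1j}. Then C is a symmetric matrix all of whose diagonal entries except possibly the first are even (and C₁₁ = n is divisible by 4), and det(B) ≡ det(C) (mod 4). -/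
open Matrix


lemma det_sub_col_mul_row {n : ℕ} (A : Matrix (Fin n) (Fin n) ℤ) (u v : Fin n → ℤ) :
    (A - Matrix.replicateCol (Fin 1) u * Matrix.replicateRow (Fin 1) v).det =
      A.det + (Matrix.fromBlocks 0 (Matrix.replicateRow (Fin 1) v) (Matrix.replicateCol (Fin 1) u) A).det := by
  set M := Matrix.fromBlocks (0 : Matrix (Fin 1) (Fin 1) ℤ) (Matrix.replicateRow (Fin 1) v)
    (Matrix.replicateCol (Fin 1) u) A with hM
  rw [← Matrix.det_fromBlocks_one₁₁]
  have h1 : Matrix.fromBlocks (1 : Matrix (Fin 1) (Fin 1) ℤ) (Matrix.replicateRow (Fin 1) v)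
      (Matrix.replicateCol (Fin 1) u) A = updateRow M (Sum.inl 0) (M (Sum.inl 0) + Pi.single (Sum.inl 0) 1) := by
    ext i j
    rcases eq_or_ne i (Sum.inl 0) with rfl | hi
    · rw [updateRow_self]
      rcases j with j | j
      · have : j = 0 := Subsingleton.elim _ _
        subst this
        simp [hM, Matrix.fromBlocks]
      · simp [hM, Matrix.fromBlocks, Pi.single_apply]
    · rw [updateRow_ne hi]
      rcases i with i | i
      · exact absurd (congrArg Sum.inl (Subsingleton.elim i 0)) hi
      · rfl
  have h2 : (updateRow M (Sum.inl 0) (Pi.single (Sum.inl 0) 1)).det = A.det := by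
    have : updateRow M (Sum.inl 0) (Pi.single (Sum.inl 0) 1) =
        Matrix.fromBlocks (1 : Matrix (Fin 1) (Fin 1) ℤ) 0 (Matrix.replicateCol (Fin 1) u) A := by
      ext i j
      rcases eq_or_ne i (Sum.inl 0) with rfl | hi
      · rw [updateRow_self]
        rcases j with j | j
        · have : j = 0 := Subsingleton.elim _ _
          subst this
          simp [Matrix.fromBlocks, Pi.single_apply]
        · simp [Matrix.fromBlocks, Pi.single_apply]
      · rw [updateRow_ne hi]
        rcases i with i | i
        · exact absurd (congrArg Sum.inl (Subsingleton.elim i 0)) hi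
        · rfl
    rw [this, Matrix.det_fromBlocks_one₁₁]
    simp
  rw [h1, Matrix.det_updateRow_add, Matrix.updateRow_eq_self, h2, add_comm]

/-- Let `B` be a tracelike matrix (symmetric, `B₀₀ = n`, `Bᵢᵢ ≡ B₀ᵢ² (mod 2)` for `i ≠ 0`)
with `4 ∣ n`, and let `cᵢ` satisfy `Bᵢᵢ = B₀ᵢ² + 2cᵢ` for `i ≠ 0`.  Let `C` agree with `B`
in the first row and column, have diagonal entries `2cᵢ` for `i ≠ 0`, and off-diagonal
entries `Bᵢⱼ − B₀ᵢB₀ⱼ` for `i ≠ j` both nonzero.  Then `C` is symmetric, its diagonal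
entries away from the first are even (and `C₀₀ = n` is divisible by `4`), and
`det B ≡ det C (mod 4)`. -/
theorem tracelike_reduce_to_even_diagonal (n : ℕ) [NeZero n] (hn : 4 ∣ n)
    (B : Matrix (Fin n) (Fin n) ℤ) (hsymm : B.IsSymm) (h00 : B 0 0 = n)
    (hdiag : ∀ i : Fin n, i ≠ 0 → B i i ≡ (B 0 i) ^ 2 [ZMOD 2])
    (c : Fin n → ℤ) (hc : ∀ i : Fin n, i ≠ 0 → B i i = (B 0 i) ^ 2 + 2 * c i) :
    letI C : Matrix (Fin n) (Fin n) ℤ := Matrix.of fun i j =>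
      if i = 0 ∨ j = 0 then B i j
      else if i = j then 2 * c i
      else B i j - B 0 i * B 0 j
    C.IsSymm ∧ C 0 0 = n ∧ (4 : ℤ) ∣ C 0 0 ∧ (∀ i : Fin n, i ≠ 0 → 2 ∣ C i i) ∧
      B.det ≡ C.det [ZMOD 4] := by
  set C : Matrix (Fin n) (Fin n) ℤ := Matrix.of fun i j =>
      if i = 0 ∨ j = 0 then B i j
      else if i = j then 2 * c i
      else B i j - B 0 i * B 0 j with hCset
  have hCdef : ∀ i j, C i j = if i = 0 ∨ j = 0 then B i j
      else if i = j then 2 * c i else B i j - B 0 i * B 0 j := fun i j => by rw [hCset]; rfl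
  have h4 : (4 : ℤ) ∣ (n : ℤ) := by exact_mod_cast Int.natCast_dvd_natCast.mpr hn
  refine ⟨Matrix.IsSymm.ext fun i j => ?_, ?_, ?_, ?_, ?_⟩
  · rw [hCdef, hCdef]
    by_cases hi : i = 0 <;> by_cases hj : j = 0
    · subst hi; subst hj; rfl
    · subst hi; simp only [or_true, true_or, if_pos, hsymm.apply]
    · subst hj; simp only [or_true, true_or, if_pos, hsymm.apply]
    · by_cases hij : i = j
      · subst hij; simp [hi]
      · simp only [hi, hj, or_self, if_neg, if_false, hij, Ne.symm hij, hsymm.apply i j]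
        ring
  · rw [hCdef]; simpa using h00
  · rw [hCdef]; simpa [h00] using h4
  · intro i hi
    rw [hCdef]
    simp [hi]
  · -- the determinant congruence
    set u : Fin n → ℤ := fun i => if i = 0 then 0 else B 0 i with hu
    have hC : C = B - Matrix.replicateCol (Fin 1) u * Matrix.replicateRow (Fin 1) u := by
      ext i j
      have hmul : (Matrix.replicateCol (Fin 1) u * Matrix.replicateRow (Fin 1) u) i j = u i * u j := by
        simp [Matrix.mul_apply]
      rw [hCdef]
      simp only [Matrix.sub_apply, hmul]
      by_cases hi : i = 0
      · subst hi; simp [hu]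
      · by_cases hj : j = 0
        · subst hj; simp [hu, hi]
        · by_cases hij : i = j
          · subst hij
            simp only [hi, hj, or_self, if_neg, if_false, if_pos, hu]
            rw [hc i hi]; ring
          · simp [hi, hj, hij, hu]
    set M := Matrix.fromBlocks (0 : Matrix (Fin 1) (Fin 1) ℤ) (Matrix.replicateRow (Fin 1) u)
      (Matrix.replicateCol (Fin 1) u) B with hM
    have hdet : C.det = B.det + M.det := by rw [hC, det_sub_col_mul_row]
    have hdvd : (4 : ℤ) ∣ M.det := by
      have hne : (Sum.inl 0 : Fin 1 ⊕ Fin n) ≠ Sum.inr 0 := by simp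
      rw [← Matrix.det_updateRow_add_smul_self M hne (-1 : ℤ)]
      set r : Fin 1 ⊕ Fin n → ℤ := M (Sum.inl 0) + (-1 : ℤ) • M (Sum.inr 0) with hr
      have hrk : ∀ k, (4 : ℤ) ∣ r k := by
        intro k
        rcases k with k | k
        · have : k = 0 := Subsingleton.elim _ _
          subst this
          simp [hr, hM, Matrix.fromBlocks, hu]
        · by_cases hk : k = 0
          · subst hk
            simp [hr, hM, Matrix.fromBlocks, hu, h00, h4]
          · simp [hr, hM, Matrix.fromBlocks, hu, hk]
      rw [Matrix.det_eq_sum_mul_adjugate_row _ (Sum.inl 0)]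
      refine Finset.dvd_sum fun k _ => ?_
      rw [Matrix.updateRow_self]
      exact Dvd.dvd.mul_right (hrk k) _
    rw [Int.ModEq]
    omega
end

section
/- Let n be divisible by 4 and let C ∈ Mₙ(ℤ) be a symmetric matrix all of whose diagonal entries are even. Let U ∈ Mₙ(ℤ) be the matrix whose strictly upper-triangular part agrees with that of C, whose diagonal is half the diagonal of C, and whose strictly lower-triangular part is zero. Then C = U + Uᵀ and det(C) ≡ det(U − Uᵀ) (mod 4). -/
/-!
Write `A = U - Uᵀ`, so that `C = U + Uᵀ = A + 2Uᵀ`. Since `2² ≡ 0 (mod 4)`, expanding the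
determinant row by row gives the first-order formula `det C ≡ det A + 2 tr(Uᵀ adj A) (mod 4)`.
As `A` is skew-symmetric of even size, so is `adj A`, whence `tr(U adj A) = -tr(Uᵀ adj A)`;
combined with `tr(A adj A) = n det A` this gives `2 tr(Uᵀ adj A) = -n det A ≡ 0 (mod 4)`.
-/

open Matrix

namespace Matrix

variable {n R : Type*} [Fintype n] [CommRing R]

theorem trace_transpose_mul_of_transpose_eq_neg {K : Matrix n n R} (hK : Kᵀ = -K)
    (M : Matrix n n R) : trace (Mᵀ * K) = -trace (M * K) := by
  rw [← trace_transpose, transpose_mul, transpose_transpose, hK, neg_mul, trace_neg,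
    trace_mul_comm]

variable [DecidableEq n]

theorem mul_det_eq_mul_det_of_dvd_sub {ε : R} (hε : ε ^ 2 = 0) {X Y : Matrix n n R}
    (hXY : ∀ i j, ε ∣ X i j - Y i j) : ε * X.det = ε * Y.det := by
  let q := Ideal.Quotient.mk (Ideal.span {ε})
  have hmap : q.mapMatrix X = q.mapMatrix Y := by
    ext i j
    exact Ideal.Quotient.eq.mpr (Ideal.mem_span_singleton.mpr (hXY i j))
  obtain ⟨r, hr⟩ : ε ∣ X.det - Y.det := by
    rw [← Ideal.mem_span_singleton, ← Ideal.Quotient.eq, RingHom.map_det, RingHom.map_det, hmap]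
  linear_combination ε * hr + r * hε

theorem det_add_smul_of_sq_eq_zero {ε : R} (hε : ε ^ 2 = 0) (A B : Matrix n n R) :
    (A + ε • B).det = A.det + ε * ∑ i, (A.updateRow i (B i)).det := by
  let M (s : Finset n) : Matrix n n R := of fun k j => if k ∈ s then A k j + ε * B k j else A k j
  suffices h : ∀ s, (M s).det = A.det + ε * ∑ i ∈ s, (A.updateRow i (B i)).det by
    convert h Finset.univ using 2
    ext k j
    simp [M]
  intro s
  induction s using Finset.induction_on with
  | empty =>
    simp only [M, Finset.notMem_empty, ↓reduceIte, Finset.sum_empty, mul_zero, add_zero]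
    rfl
  | insert i s hi ih =>
    have hMi : M s i = A i := funext fun j => by simp [M, hi]
    have hM : M (insert i s) = (M s).updateRow i (A i + ε • B i) := by
      ext k j
      by_cases hk : k = i <;> simp [M, hk]
    have hrow : ε * ((M s).updateRow i (B i)).det = ε * (A.updateRow i (B i)).det := by
      refine mul_det_eq_mul_det_of_dvd_sub hε fun k j => ?_
      by_cases hk : k = i
      · simp [hk]
      · by_cases hks : k ∈ s <;> simp [M, updateRow_ne hk, hks]
    rw [hM, Finset.sum_insert hi, det_updateRow_add, det_updateRow_smul, ← hMi, updateRow_eq_self,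
      hrow, ih]
    ring

theorem sum_det_updateRow_eq_trace_mul_adjugate (A B : Matrix n n R) :
    ∑ i, (A.updateRow i (B i)).det = trace (B * adjugate A) := by
  refine Finset.sum_congr rfl fun i _ => ?_
  rw [← cramer_transpose_apply, cramer_eq_adjugate_mulVec, ← adjugate_transpose]
  simp only [mulVec, dotProduct, transpose_apply, diag_apply, mul_apply, mul_comm]

theorem adjugate_transpose_eq_neg {A : Matrix n n R} (hA : Aᵀ = -A)
    (hn : Even (Fintype.card n)) : (adjugate A)ᵀ = -adjugate A := by
  rcases isEmpty_or_nonempty n with hempty | hne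
  · ext i; exact isEmptyElim i
  have hodd : Odd (Fintype.card n - 1) := Nat.Even.sub_odd Fintype.card_pos hn odd_one
  rw [adjugate_transpose, hA, ← neg_one_smul R A, adjugate_smul, hodd.neg_one_pow, neg_one_smul]

theorem det_add_transpose_eq_det_sub_transpose (h4 : (4 : R) = 0)
    (hn : 4 ∣ Fintype.card n) (U : Matrix n n R) : (U + Uᵀ).det = (U - Uᵀ).det := by
  set A := U - Uᵀ
  have hA : Aᵀ = -A := by rw [transpose_sub, transpose_transpose, neg_sub]
  have hadj := adjugate_transpose_eq_neg hA (by rw [even_iff_two_dvd]; omega)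
  set T := trace (Uᵀ * adjugate A)
  have htrace : (Fintype.card n : R) * A.det = -(2 * T) := by
    have hU : trace (U * adjugate A) = -T := by
      rw [← trace_transpose_mul_of_transpose_eq_neg hadj, transpose_transpose]
    calc (Fintype.card n : R) * A.det = trace (A * adjugate A) := by
          rw [mul_adjugate, trace_smul, trace_one, smul_eq_mul, mul_comm]
      _ = -(2 * T) := by rw [sub_mul, trace_sub, hU]; ring
  have hcard : (Fintype.card n : R) = 0 := by
    obtain ⟨k, hk⟩ := hn
    rw [hk, Nat.cast_mul, Nat.cast_ofNat, h4, zero_mul]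
  have hsq : (2 : R) ^ 2 = 0 := by rw [← h4]; norm_num
  calc (U + Uᵀ).det = (A + (2 : R) • Uᵀ).det := by congr 1; simp only [A, two_smul]; abel
    _ = A.det + 2 * T := by
      rw [det_add_smul_of_sq_eq_zero hsq, sum_det_updateRow_eq_trace_mul_adjugate]
    _ = A.det := by linear_combination htrace - A.det * hcard

theorem det_add_transpose_modEq_det_sub_transpose (hn : 4 ∣ Fintype.card n)
    (U : Matrix n n ℤ) : (U + Uᵀ).det ≡ (U - Uᵀ).det [ZMOD 4] := by
  refine (ZMod.intCast_eq_intCast_iff _ _ 4).mp ?_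
  rw [Int.cast_det, Int.cast_det, Matrix.map_add _ Int.cast_add, Matrix.map_sub _ Int.cast_sub,
    transpose_map]
  exact det_add_transpose_eq_det_sub_transpose rfl hn _

def upperHalf {ι : Type*} [LinearOrder ι] (C : Matrix ι ι ℤ) : Matrix ι ι ℤ :=
  of fun i j => if i < j then C i j else if i = j then C i i / 2 else 0

theorem IsSymm.eq_upperHalf_add_transpose {ι : Type*} [LinearOrder ι] {C : Matrix ι ι ℤ}
    (hsymm : C.IsSymm) (hdiag : ∀ i, 2 ∣ C i i) : C = upperHalf C + (upperHalf C)ᵀ := by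
  ext i j
  rcases lt_trichotomy i j with h | rfl | h
  · simp [upperHalf, h, h.not_gt, h.ne']
  · simp only [upperHalf, add_apply, transpose_apply, of_apply, lt_self_iff_false, ↓reduceIte]
    have := hdiag i
    omega
  · simp [upperHalf, h, h.not_gt, h.ne', hsymm.apply i j]

end Matrix

/-- Let `4 ∣ n` and let `C ∈ Mₙ(ℤ)` be symmetric with even diagonal.  Let `U` be the
matrix whose strictly upper-triangular part agrees with that of `C`, whose diagonal
is half the diagonal of `C`, and whose strictly lower-triangular part is zero.
Then `C = U + Uᵀ` and `det C ≡ det(U − Uᵀ) (mod 4)`. -/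
theorem det_symm_even_diag_modEq_skew (n : ℕ) (hn : 4 ∣ n)
    (C : Matrix (Fin n) (Fin n) ℤ) (hsymm : C.IsSymm) (hdiag : ∀ i, 2 ∣ C i i) :
    letI U : Matrix (Fin n) (Fin n) ℤ := Matrix.of fun i j =>
      if i < j then C i j else if i = j then C i i / 2 else 0
    C = U + Uᵀ ∧ C.det ≡ (U - Uᵀ).det [ZMOD 4] := by
  show C = upperHalf C + (upperHalf C)ᵀ ∧
    C.det ≡ (upperHalf C - (upperHalf C)ᵀ).det [ZMOD 4]
  have hC := hsymm.eq_upperHalf_add_transpose hdiag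
  refine ⟨hC, ?_⟩
  calc C.det = (upperHalf C + (upperHalf C)ᵀ).det := by rw [← hC]
    _ ≡ _ [ZMOD 4] :=
      det_add_transpose_modEq_det_sub_transpose (by rwa [Fintype.card_fin]) _
end

section
/- Let n be divisible by 4 and let C ∈ Mₙ(ℤ) be a symmetric matrix all of whose diagonal entries are even. Then det(C) ≡ 0 or 1 (mod 4). -/
/-!
Reduce modulo 4. If all entries are even, the matrix is `2 • N` and its determinant vanishes
since `2 ^ 2 = 0` in `ZMod 4`. Otherwise some off-diagonal entry `u` is odd, and the principal
`2 × 2` block `A = !![a, u; u, b]` through it has determinant `a * b - u ^ 2 = -1`. The Schur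
complement `D - Bᵀ * A⁻¹ * B` is again symmetric with even diagonal, because
`A⁻¹ = -adjugate A` is, and `xᵀ P x` is even whenever `P` is symmetric with even diagonal.
Induction on the size gives `det ∈ {0, (-1) ^ (n / 2)}` in `ZMod 4`, and `(-1) ^ (n / 2) = 1`
when `4 ∣ n`.
-/

open Matrix

namespace Matrix

variable {ι κ R : Type*} [Fintype ι] [CommRing R]

theorem even_sum_sum_of_symm (f : ι → ι → R) (hsymm : ∀ a b, f a b = f b a)
    (hdiag : ∀ a, Even (f a a)) : Even (∑ a, ∑ b, f a b) := by
  classical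
  suffices ∀ s : Finset ι, Even (∑ a ∈ s, ∑ b ∈ s, f a b) from this Finset.univ
  intro s
  induction s using Finset.induction_on with
  | empty => simp
  | insert x s hx ih =>
    have hsplit : ∑ a ∈ insert x s, ∑ b ∈ insert x s, f a b =
        f x x + (∑ b ∈ s, f x b + ∑ b ∈ s, f x b) + ∑ a ∈ s, ∑ b ∈ s, f a b := by
      simp only [Finset.sum_insert hx, Finset.sum_add_distrib, hsymm _ x]
      ring
    rw [hsplit]
    exact ((hdiag x).add (Even.add_self _)).add ih

theorem IsSymm.transpose_mul_mul {P : Matrix ι ι R} (hP : P.IsSymm) (X : Matrix ι κ R) :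
    (Xᵀ * P * X).IsSymm := by
  simp [IsSymm, transpose_mul, hP.eq, Matrix.mul_assoc]

theorem even_diag_transpose_mul_mul {P : Matrix ι ι R} (hP : P.IsSymm)
    (hdiag : ∀ i, Even (P i i)) (X : Matrix ι κ R) (k : κ) : Even ((Xᵀ * P * X) k k) := by
  simp only [mul_apply, transpose_apply, Finset.sum_mul]
  rw [Finset.sum_comm]
  refine even_sum_sum_of_symm _ (fun a b => ?_) (fun a => ?_)
  · rw [hP.apply a b]; ring
  · obtain ⟨r, hr⟩ := hdiag a
    exact ⟨X a k * r * X a k, by rw [hr]; ring⟩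

theorem two_pow_card_dvd_det_of_forall_even [DecidableEq ι] {M : Matrix ι ι R}
    (h : ∀ i j, Even (M i j)) : 2 ^ Fintype.card ι ∣ M.det := by
  choose N hN using h
  have hM : M = (2 : R) • Matrix.of N := by
    ext i j; simp [hN, two_mul]
  rw [hM, det_smul]
  exact dvd_mul_right _ _

theorem even_inv_diag_fin_two {A : Matrix (Fin 2) (Fin 2) R} (hdiag : ∀ i, Even (A i i))
    (i : Fin 2) : Even (A⁻¹ i i) := by
  rw [inv_def, adjugate_fin_two]
  fin_cases i
  · simpa using (hdiag 1).mul_left _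
  · simpa using (hdiag 0).mul_left _

theorem fromBlocks_toBlocks_of_isSymm {m n α : Type*} {N : Matrix (m ⊕ n) (m ⊕ n) α}
    (hN : N.IsSymm) :
    fromBlocks N.toBlocks₁₁ N.toBlocks₁₂ N.toBlocks₁₂ᵀ N.toBlocks₂₂ = N := by
  conv_rhs => rw [← fromBlocks_toBlocks N]
  congr 1
  ext k a
  exact hN.apply _ _

end Matrix

namespace ZMod

theorem mul_eq_zero_of_even_four : ∀ a b : ZMod 4, Even a → Even b → a * b = 0 := by
  unfold Even; decide

theorem mul_self_eq_one_of_not_even_four : ∀ u : ZMod 4, ¬ Even u → u * u = 1 := by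
  unfold Even; decide

end ZMod

namespace Matrix

variable {β : Type*}

theorem det_fin_two_eq_neg_one_of_even_symm {A : Matrix (Fin 2) (Fin 2) (ZMod 4)}
    (hA : A.IsSymm) (hdiag : ∀ i, Even (A i i)) (hodd : ¬ Even (A 0 1)) : A.det = -1 := by
  rw [det_fin_two, hA.apply 0 1, ZMod.mul_eq_zero_of_even_four _ _ (hdiag 0) (hdiag 1),
    ZMod.mul_self_eq_one_of_not_even_four _ hodd, zero_sub]

theorem det_fromBlocks_eq_neg_det_schur [Fintype β] [DecidableEq β]
    {A : Matrix (Fin 2) (Fin 2) (ZMod 4)} (hA : A.IsSymm) (hdiag : ∀ i, Even (A i i))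
    (hodd : ¬ Even (A 0 1)) (B : Matrix (Fin 2) β (ZMod 4)) (D : Matrix β β (ZMod 4)) :
    (fromBlocks A B Bᵀ D).det = -(D - Bᵀ * A⁻¹ * B).det := by
  have hdet := det_fin_two_eq_neg_one_of_even_symm hA hdiag hodd
  have := invertibleOfIsUnitDet A (hdet ▸ isUnit_one.neg)
  rw [det_fromBlocks₁₁, invOf_eq_nonsing_inv, hdet, neg_one_mul]

theorem even_diag_schur_fin_two {A : Matrix (Fin 2) (Fin 2) (ZMod 4)} (hA : A.IsSymm)
    (hAdiag : ∀ i, Even (A i i)) (B : Matrix (Fin 2) β (ZMod 4)) {D : Matrix β β (ZMod 4)}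
    (hDdiag : ∀ k, Even (D k k)) (k : β) : Even ((D - Bᵀ * A⁻¹ * B) k k) :=
  (hDdiag k).sub (even_diag_transpose_mul_mul hA.inv (even_inv_diag_fin_two hAdiag) B k)

end Matrix

theorem ZMod.det_eq_zero_of_forall_even {α : Type*} [Fintype α] [DecidableEq α]
    (hcard : 2 ≤ Fintype.card α) {M : Matrix α α (ZMod 4)} (h : ∀ i j, Even (M i j)) :
    M.det = 0 := by
  have h4 : (2 : ZMod 4) ^ Fintype.card α = 0 := pow_eq_zero_of_le hcard (by decide)
  simpa [h4] using Matrix.two_pow_card_dvd_det_of_forall_even h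

theorem ZMod.det_eq_zero_or_neg_one_pow_of_even_symm {α : Type*} [Fintype α] [DecidableEq α]
    (m : ℕ) (hcard : Fintype.card α = 2 * m) (M : Matrix α α (ZMod 4)) (hM : M.IsSymm)
    (hdiag : ∀ i, Even (M i i)) : M.det = 0 ∨ M.det = (-1) ^ m := by
  induction m generalizing α with
  | zero =>
    have : IsEmpty α := Fintype.card_eq_zero_iff.mp hcard
    simp
  | succ m ih =>
    by_cases heven : ∀ i j, Even (M i j)
    · exact .inl (det_eq_zero_of_forall_even (by omega) heven)
    push Not at heven
    obtain ⟨i, j, hodd⟩ := heven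
    have hij : i ≠ j := fun h => hodd (h ▸ hdiag i)
    let e : Fin 2 ⊕ {x // x ∉ Set.range ![i, j]} ≃ α :=
      ((Equiv.ofInjective _ (injective_pair_iff_ne.mpr hij)).sumCongr (Equiv.refl _)).trans
        (Equiv.sumCompl _)
    set N := M.submatrix e e
    have hNsymm : N.IsSymm := hM.submatrix e
    set A := N.toBlocks₁₁
    set B := N.toBlocks₁₂
    set D := N.toBlocks₂₂
    have hA : A.IsSymm := hNsymm.submatrix Sum.inl
    have hAodd : ¬ Even (A 0 1) := by simpa [A, N, e, toBlocks₁₁] using hodd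
    have hD : D.IsSymm := hNsymm.submatrix Sum.inr
    have hdet : M.det = -(D - Bᵀ * A⁻¹ * B).det :=
      calc M.det = N.det := (det_submatrix_equiv_self e M).symm
        _ = (fromBlocks A B Bᵀ D).det := by rw [fromBlocks_toBlocks_of_isSymm hNsymm]
        _ = -(D - Bᵀ * A⁻¹ * B).det :=
          det_fromBlocks_eq_neg_det_schur hA (fun a => hdiag _) hAodd B D
    have hcard' : Fintype.card {x // x ∉ Set.range ![i, j]} = 2 * m := by
      have := Fintype.card_congr e
      simp only [Fintype.card_sum, Fintype.card_fin] at this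
      omega
    rcases ih hcard' _ (hD.sub (hA.inv.transpose_mul_mul B))
        (even_diag_schur_fin_two hA (fun a => hdiag _) B (fun k => hdiag _)) with h | h
    · left; rw [hdet, h, neg_zero]
    · right; rw [hdet, h, pow_succ]; ring

/-- Let `4 ∣ n` and let `C ∈ Mₙ(ℤ)` be a symmetric matrix all of whose diagonal
entries are even.  Then `det C ≡ 0` or `1 (mod 4)`. -/
theorem det_symm_even_diag_mod_four (n : ℕ) (hn : 4 ∣ n)
    (C : Matrix (Fin n) (Fin n) ℤ) (hsymm : C.IsSymm) (hdiag : ∀ i, 2 ∣ C i i) :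
    C.det % 4 = 0 ∨ C.det % 4 = 1 := by
  obtain ⟨t, rfl⟩ := hn
  have hdet : ((Int.castRingHom (ZMod 4)).mapMatrix C).det = 0 ∨
      ((Int.castRingHom (ZMod 4)).mapMatrix C).det = 1 := by
    have := ZMod.det_eq_zero_or_neg_one_pow_of_even_symm (2 * t)
      (by rw [Fintype.card_fin]; ring) _ (hsymm.map _)
      fun i => (even_iff_two_dvd.mpr (hdiag i)).map (Int.castRingHom (ZMod 4))
    rwa [pow_mul, neg_one_sq, one_pow] at this
  rw [← RingHom.map_det, eq_intCast, ← Int.cast_zero, ← Int.cast_one,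
    ZMod.intCast_eq_intCast_iff', ZMod.intCast_eq_intCast_iff'] at hdet
  simpa using hdet
end

section
/- For every skew-symmetric matrix A ∈ Mₙ(ℤ) (i.e., Aᵀ = −A), the determinant det(A) is a perfect square in ℤ; in particular det(A) ≡ 0 or 1 (mod 4). -/
/-! Over a field with `2 ≠ 0`, pivot on a nonzero entry `c = A 0 j`: after moving it to position
`(0, 1)` the leading `2 × 2` block is `!![0, c; -c, 0]`, of determinant `c ^ 2`, and its Schur
complement is again skew-symmetric, so `det A = c ^ 2 * det S` and induction on the size applies.
For an integer matrix, work over `ℚ`: an integer that is a rational square is an integer square,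
and integer squares are `0` or `1` modulo `4`. -/

open Matrix

theorem Int.sq_emod_four_eq_zero_or_one (k : ℤ) : k ^ 2 % 4 = 0 ∨ k ^ 2 % 4 = 1 := by
  rcases Int.even_or_odd k with ⟨m, rfl⟩ | hk
  · exact .inl (Int.emod_eq_zero_of_dvd ⟨m ^ 2, by ring⟩)
  · exact .inr (Int.sq_mod_four_eq_one_of_odd hk)

theorem Fin.exists_sum_equiv_inl_zero_inl_one {m : ℕ} {j : Fin (m + 2)} (hj : j ≠ 0) :
    ∃ e : Fin 2 ⊕ Fin m ≃ Fin (m + 2), e (.inl 0) = 0 ∧ e (.inl 1) = j := by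
  set e₀ : Fin 2 ⊕ Fin m ≃ Fin (m + 2) := finSumFinEquiv.trans (finCongr (add_comm 2 m))
  have h0 : e₀ (.inl 0) = 0 := Fin.ext (by simp [e₀])
  have h1 : e₀ (.inl 1) = 1 := Fin.ext (by simp [e₀])
  refine ⟨e₀.trans (Equiv.swap 1 j), ?_, ?_⟩
  · simpa [h0] using Equiv.swap_apply_of_ne_of_ne zero_ne_one hj.symm
  · simp [h1]

namespace Matrix

section CommRing

variable {R : Type*} [CommRing R] {m n : Type*} [Fintype m] [DecidableEq m]

theorem transpose_invOf_eq_neg (A : Matrix m m R) [Invertible A] (hA : Aᵀ = -A) :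
    (⅟A)ᵀ = -⅟A := by
  refine neg_eq_iff_eq_neg.mp (invOf_eq_left_inv ?_).symm
  rw [neg_mul, ← mul_neg, ← hA, ← transpose_mul, mul_invOf_self, transpose_one]

theorem transpose_schur_eq_neg (A : Matrix m m R) (B : Matrix m n R) (C : Matrix n m R)
    (D : Matrix n n R) [Invertible A] (hM : (fromBlocks A B C D)ᵀ = -fromBlocks A B C D) :
    (D - C * ⅟A * B)ᵀ = -(D - C * ⅟A * B) := by
  rw [fromBlocks_transpose, fromBlocks_neg, fromBlocks_inj] at hM
  obtain ⟨hA, hC, hB, hD⟩ := hM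
  rw [transpose_sub, transpose_mul, transpose_mul, hD, hB, hC, transpose_invOf_eq_neg A hA]
  simp only [Matrix.neg_mul, Matrix.mul_neg, neg_neg, Matrix.mul_assoc]
  abel

end CommRing

section Field

variable {K : Type*} [Field K] [NeZero (2 : K)]

theorem apply_self_eq_zero_of_transpose_eq_neg {n : Type*} {A : Matrix n n K} (hA : Aᵀ = -A)
    (i : n) : A i i = 0 := by
  have h : A i i = -A i i := congr_fun₂ hA i i
  exact (mul_eq_zero.mp (two_mul (A i i) ▸ add_eq_zero_iff_eq_neg.mpr h)).resolve_left two_ne_zero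

theorem det_fin_two_of_transpose_eq_neg {A : Matrix (Fin 2) (Fin 2) K} (hA : Aᵀ = -A) :
    A.det = A 0 1 ^ 2 := by
  have h10 : A 1 0 = -A 0 1 := congr_fun₂ hA 0 1
  rw [det_fin_two, apply_self_eq_zero_of_transpose_eq_neg hA,
    apply_self_eq_zero_of_transpose_eq_neg hA, h10]
  ring

theorem exists_det_eq_sq_mul_det_of_transpose_eq_neg {ι : Type*} [Fintype ι] [DecidableEq ι]
    (M : Matrix (Fin 2 ⊕ ι) (Fin 2 ⊕ ι) K) (hM : Mᵀ = -M) (h : M (.inl 0) (.inl 1) ≠ 0) :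
    ∃ S : Matrix ι ι K, Sᵀ = -S ∧ M.det = M (.inl 0) (.inl 1) ^ 2 * S.det := by
  obtain ⟨A, B, C, D, rfl⟩ : ∃ A B C D, M = fromBlocks A B C D :=
    ⟨_, _, _, _, (fromBlocks_toBlocks M).symm⟩
  rw [fromBlocks_apply₁₁] at h ⊢
  have hA : Aᵀ = -A := by
    rw [fromBlocks_transpose, fromBlocks_neg, fromBlocks_inj] at hM
    exact hM.1
  have hdetA : A.det = A 0 1 ^ 2 := det_fin_two_of_transpose_eq_neg hA
  have : Invertible A := invertibleOfIsUnitDet A (hdetA ▸ (pow_ne_zero 2 h).isUnit)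
  exact ⟨D - C * ⅟A * B, transpose_schur_eq_neg A B C D hM, by rw [det_fromBlocks₁₁, hdetA]⟩

theorem isSquare_det_of_transpose_eq_neg :
    ∀ {n : ℕ} (A : Matrix (Fin n) (Fin n) K), Aᵀ = -A → IsSquare A.det
  | 0, A, _ => ⟨1, by simp⟩
  | 1, A, hA => ⟨0, by simp [apply_self_eq_zero_of_transpose_eq_neg hA]⟩
  | m + 2, A, hA => by
    by_cases hrow : ∀ j, A 0 j = 0
    · exact ⟨0, by simp [det_eq_zero_of_row_eq_zero 0 hrow]⟩
    obtain ⟨j, hj⟩ := not_forall.mp hrow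
    have hj0 : j ≠ 0 := by
      rintro rfl
      exact hj (apply_self_eq_zero_of_transpose_eq_neg hA 0)
    obtain ⟨e, he0, he1⟩ := Fin.exists_sum_equiv_inl_zero_inl_one hj0
    have hM : (A.submatrix e e)ᵀ = -A.submatrix e e := by
      rw [transpose_submatrix, hA]
      rfl
    have hc : A.submatrix e e (.inl 0) (.inl 1) = A 0 j := by simp [he0, he1]
    obtain ⟨S, hS, hdet⟩ := exists_det_eq_sq_mul_det_of_transpose_eq_neg _ hM (hc ▸ hj)
    obtain ⟨r, hr⟩ := isSquare_det_of_transpose_eq_neg S hS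
    refine ⟨A 0 j * r, ?_⟩
    rw [← det_submatrix_equiv_self e, hdet, hc, hr]
    ring

end Field

end Matrix

/-- The determinant of a skew-symmetric integer matrix is a perfect square;
in particular it is congruent to `0` or `1` modulo `4`. -/
theorem det_skew_symmetric_is_square (n : ℕ) (A : Matrix (Fin n) (Fin n) ℤ)
    (hA : Aᵀ = -A) :
    (∃ k : ℤ, A.det = k ^ 2) ∧ (A.det % 4 = 0 ∨ A.det % 4 = 1) := by
  have hQ : (A.map (Int.cast : ℤ → ℚ))ᵀ = -A.map (Int.cast : ℤ → ℚ) := by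
    rw [← transpose_map, hA, Matrix.map_neg _ Int.cast_neg]
  obtain ⟨k, hk⟩ : IsSquare A.det := by
    rw [← Rat.isSquare_intCast_iff, Int.cast_det]
    exact isSquare_det_of_transpose_eq_neg _ hQ
  rw [hk, ← sq]
  exact ⟨⟨k, rfl⟩, Int.sq_emod_four_eq_zero_or_one k⟩
end
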